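/- arXiv:1212.6385 — 4 statements merged into one kernel-verified Lean document; each statement's English description precedes it below -/
import Mathlib

section
/- Stable Splitting Lemma: Let V and Ṽ be finite-dimensional real vector spaces, a a symmetric positive definite bilinear form on V, ã a symmetric positive definite bilinear form on Ṽ, b a symmetric positive semidefinite bilinear form on V, and Q : Ṽ → V, Q̃ : V → Ṽ linear maps. Assume there are constants C₁, C₂, C₃, C₄ > 0 such that for all ṽ ∈ Ṽ and v ∈ V: (i) a(Qṽ, Qṽ) ≤ C₁ ã(ṽ, ṽ); (ii) ã(Q̃v, Q̃v) ≤ C₂ a(v, v); (iii) b(v − Q(Q̃v), v − Q(Q̃v)) ≤ C₃ a(v, v); (iv) a(w, w) ≤ C₄ b(w, w) for all w ∈ V. Then for every v ∈ V, (1/(2·max(C₁, C₄))) · a(v, v) ≤ inf { b(w, w) + ã(ṽ, ṽ) : w ∈ V, ṽ ∈ Ṽ, v = w + Qṽ } ≤ (C₂ + C₃) · a(v, v). -/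
/-!
Any splitting `v = w + Q ṽ` gives `a(v,v) ≤ 2 (a(w,w) + a(Qṽ,Qṽ))` by the parallelogram law for
the positive semidefinite form `a`, and (i), (iv) bound the right side by
`2 max(C₁, C₄) (b(w,w) + ã(ṽ,ṽ))`. For the upper bound it suffices to test the single splitting
`w = v - Q Q̃ v`, `ṽ = Q̃ v`, which (ii) and (iii) control.
-/

theorem LinearMap.apply_self_nonneg_of_pos {R M : Type*} [CommSemiring R] [Preorder R]
    [AddCommMonoid M] [Module R M] (B : M →ₗ[R] M →ₗ[R] R) (hB : ∀ v, v ≠ 0 → 0 < B v v)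
    (v : M) : 0 ≤ B v v := by
  rcases eq_or_ne v 0 with rfl | hv
  · simp
  · exact (hB v hv).le

section Forms

variable {𝕜 M : Type*} [Field 𝕜] [LinearOrder 𝕜] [IsStrictOrderedRing 𝕜]
  [AddCommGroup M] [Module 𝕜 M] (B : M →ₗ[𝕜] M →ₗ[𝕜] 𝕜)

theorem LinearMap.apply_add_self_le (hB : ∀ v, 0 ≤ B v v) (x y : M) :
    B (x + y) (x + y) ≤ 2 * (B x x + B y y) := by
  have hxy := hB (x - y)
  simp only [map_add, map_sub, LinearMap.add_apply, LinearMap.sub_apply] at hxy ⊢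
  linarith

end Forms

section Splitting

variable {V tV : Type*} [AddCommGroup V] [Module ℝ V] [AddCommGroup tV] [Module ℝ tV]
  (a b : V →ₗ[ℝ] V →ₗ[ℝ] ℝ) (ta : tV →ₗ[ℝ] tV →ₗ[ℝ] ℝ) (Q : tV →ₗ[ℝ] V)

def splittingEnergies (v : V) : Set ℝ :=
  {t | ∃ w : V, ∃ tv : tV, v = w + Q tv ∧ t = b w w + ta tv tv}

variable {a b ta Q}

theorem splittingEnergies_nonempty (v : V) : (splittingEnergies b ta Q v).Nonempty :=
  ⟨_, v, 0, by simp, rfl⟩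

theorem sInf_splittingEnergies_le (hb : ∀ w, 0 ≤ b w w) (hta : ∀ tv, 0 ≤ ta tv tv)
    {v w : V} {tv : tV} (hv : v = w + Q tv) :
    sInf (splittingEnergies b ta Q v) ≤ b w w + ta tv tv := by
  refine csInf_le ⟨0, ?_⟩ ⟨w, tv, hv, rfl⟩
  rintro t ⟨w', tv', -, rfl⟩
  exact add_nonneg (hb w') (hta tv')

theorem le_mul_of_mem_splittingEnergies (ha : ∀ v, 0 ≤ a v v) {M : ℝ}
    (hQ : ∀ tv, a (Q tv) (Q tv) ≤ M * ta tv tv) (hb : ∀ w, a w w ≤ M * b w w)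
    {v : V} {t : ℝ} (ht : t ∈ splittingEnergies b ta Q v) : a v v ≤ 2 * M * t := by
  obtain ⟨w, tv, rfl, rfl⟩ := ht
  calc a (w + Q tv) (w + Q tv) ≤ 2 * (a w w + a (Q tv) (Q tv)) := a.apply_add_self_le ha w (Q tv)
    _ ≤ 2 * (M * b w w + M * ta tv tv) := by gcongr; exacts [hb w, hQ tv]
    _ = 2 * M * (b w w + ta tv tv) := by ring

theorem div_le_sInf_splittingEnergies (ha : ∀ v, 0 ≤ a v v) {M : ℝ} (hM : 0 < M)
    (hQ : ∀ tv, a (Q tv) (Q tv) ≤ M * ta tv tv) (hb : ∀ w, a w w ≤ M * b w w) (v : V) :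
    1 / (2 * M) * a v v ≤ sInf (splittingEnergies b ta Q v) := by
  refine le_csInf (splittingEnergies_nonempty v) fun t ht => ?_
  rw [one_div_mul_eq_div, div_le_iff₀ (by positivity), mul_comm t]
  exact le_mul_of_mem_splittingEnergies ha hQ hb ht

end Splitting

theorem stable_splitting_general
    (V tV : Type*) [AddCommGroup V] [Module ℝ V]
    [AddCommGroup tV] [Module ℝ tV]
    (a : V →ₗ[ℝ] V →ₗ[ℝ] ℝ) (ta : tV →ₗ[ℝ] tV →ₗ[ℝ] ℝ) (b : V →ₗ[ℝ] V →ₗ[ℝ] ℝ)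
    (ha_pos : ∀ v : V, v ≠ 0 → 0 < a v v)
    (hta_pos : ∀ v : tV, v ≠ 0 → 0 < ta v v)
    (hb_nonneg : ∀ v : V, 0 ≤ b v v)
    (Q : tV →ₗ[ℝ] V) (tQ : V →ₗ[ℝ] tV)
    (C₁ C₂ C₃ C₄ : ℝ) (hC₁ : 0 < C₁)
    (h1 : ∀ tv : tV, a (Q tv) (Q tv) ≤ C₁ * ta tv tv)
    (h2 : ∀ v : V, ta (tQ v) (tQ v) ≤ C₂ * a v v)
    (h3 : ∀ v : V, b (v - Q (tQ v)) (v - Q (tQ v)) ≤ C₃ * a v v)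
    (h4 : ∀ w : V, a w w ≤ C₄ * b w w) :
    ∀ v : V,
      (1 / (2 * max C₁ C₄)) * a v v ≤
          sInf {t : ℝ | ∃ w : V, ∃ tv : tV, v = w + Q tv ∧ t = b w w + ta tv tv} ∧
        sInf {t : ℝ | ∃ w : V, ∃ tv : tV, v = w + Q tv ∧ t = b w w + ta tv tv} ≤
          (C₂ + C₃) * a v v := by
  intro v
  have ha := a.apply_self_nonneg_of_pos ha_pos
  have hta := ta.apply_self_nonneg_of_pos hta_pos
  have hQ (tv : tV) : a (Q tv) (Q tv) ≤ max C₁ C₄ * ta tv tv :=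
    (h1 tv).trans (by gcongr; exacts [hta tv, le_max_left _ _])
  have hb (w : V) : a w w ≤ max C₁ C₄ * b w w :=
    (h4 w).trans (by gcongr; exacts [hb_nonneg w, le_max_right _ _])
  refine ⟨div_le_sInf_splittingEnergies ha (lt_max_of_lt_left hC₁) hQ hb v, ?_⟩
  calc sInf (splittingEnergies b ta Q v)
      ≤ b (v - Q (tQ v)) (v - Q (tQ v)) + ta (tQ v) (tQ v) :=
        sInf_splittingEnergies_le hb_nonneg hta (sub_add_cancel v _).symm
    _ ≤ (C₂ + C₃) * a v v := by linarith [h2 v, h3 v]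

/-- **Stable Splitting Lemma** (auxiliary space method).  Let `V`, `tV` be
finite-dimensional real vector spaces, `a`, `ta` symmetric positive definite bilinear
forms on `V` resp. `tV`, `b` a symmetric positive semidefinite bilinear form on `V`, and
`Q : tV → V`, `tQ : V → tV` linear maps satisfying the ASM direct estimates (i)–(iv).
Then `a(v,v)` is equivalent, with the stated constants, to
`inf { b(w,w) + ta(ṽ,ṽ) : v = w + Q ṽ }`. -/
theorem stable_splitting
    (V tV : Type*) [AddCommGroup V] [Module ℝ V] [FiniteDimensional ℝ V]
    [AddCommGroup tV] [Module ℝ tV] [FiniteDimensional ℝ tV]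
    (a : V →ₗ[ℝ] V →ₗ[ℝ] ℝ) (ta : tV →ₗ[ℝ] tV →ₗ[ℝ] ℝ) (b : V →ₗ[ℝ] V →ₗ[ℝ] ℝ)
    (ha_symm : ∀ u v : V, a u v = a v u)
    (ha_pos : ∀ v : V, v ≠ 0 → 0 < a v v)
    (hta_symm : ∀ u v : tV, ta u v = ta v u)
    (hta_pos : ∀ v : tV, v ≠ 0 → 0 < ta v v)
    (hb_symm : ∀ u v : V, b u v = b v u)
    (hb_nonneg : ∀ v : V, 0 ≤ b v v)
    (Q : tV →ₗ[ℝ] V) (tQ : V →ₗ[ℝ] tV)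
    (C₁ C₂ C₃ C₄ : ℝ) (hC₁ : 0 < C₁) (hC₂ : 0 < C₂) (hC₃ : 0 < C₃) (hC₄ : 0 < C₄)
    (h1 : ∀ tv : tV, a (Q tv) (Q tv) ≤ C₁ * ta tv tv)
    (h2 : ∀ v : V, ta (tQ v) (tQ v) ≤ C₂ * a v v)
    (h3 : ∀ v : V, b (v - Q (tQ v)) (v - Q (tQ v)) ≤ C₃ * a v v)
    (h4 : ∀ w : V, a w w ≤ C₄ * b w w) :
    ∀ v : V,
      (1 / (2 * max C₁ C₄)) * a v v ≤
          sInf {t : ℝ | ∃ w : V, ∃ tv : tV, v = w + Q tv ∧ t = b w w + ta tv tv} ∧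
        sInf {t : ℝ | ∃ w : V, ∃ tv : tV, v = w + Q tv ∧ t = b w w + ta tv tv} ≤
          (C₂ + C₃) * a v v :=
  stable_splitting_general V tV a ta b ha_pos hta_pos hb_nonneg Q tQ C₁ C₂ C₃ C₄ hC₁ h1 h2 h3 h4
end

section
/- Let B be a symmetric positive definite n×n real matrix, Ã a symmetric positive definite m×m real matrix, and S an n×m real matrix. Then the matrix C := B⁻¹ + S Ã⁻¹ Sᵀ is symmetric positive definite, and for every v ∈ ℝⁿ, vᵀ C⁻¹ v = min { wᵀ B w + ṽᵀ Ã ṽ : w ∈ ℝⁿ, ṽ ∈ ℝᵐ, v = w + S ṽ }, the minimum being attained. -/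
/-!
With `u := C⁻¹ v`, completing the square in the quadratic form of a positive definite `M` gives
the Young–Fenchel inequality `2 ⟪u, w⟫ - uᵀ M⁻¹ u ≤ wᵀ M w`, with equality at `w = M⁻¹ u`.
Applying it to `(B, u, w)` and `(Ã, Sᵀ u, ṽ)` and adding, every decomposition `v = w + S ṽ`
costs at least `2 ⟪u, v⟫ - uᵀ C u = vᵀ C⁻¹ v`, and `w = B⁻¹ u`, `ṽ = Ã⁻¹ Sᵀ u` attain it.
-/

open Matrix

lemma Matrix.IsHermitian.dotProduct_mulVec_comm {n : Type*} [Fintype n] {M : Matrix n n ℝ}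
    (hM : M.IsHermitian) (x y : n → ℝ) : x ⬝ᵥ (M *ᵥ y) = y ⬝ᵥ (M *ᵥ x) := by
  have hsymm : Mᵀ = M := isHermitian_iff_isSymm.mp hM
  rw [dotProduct_mulVec, ← mulVec_transpose, hsymm, dotProduct_comm]

lemma Matrix.dotProduct_mulVec_eq_transpose_mulVec_dotProduct {n m R : Type*} [Fintype n]
    [Fintype m] [CommSemiring R] (S : Matrix n m R) (u : n → R) (x : m → R) :
    u ⬝ᵥ (S *ᵥ x) = (Sᵀ *ᵥ u) ⬝ᵥ x := by
  rw [dotProduct_mulVec, mulVec_transpose]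

lemma Matrix.dotProduct_mul_mul_transpose_mulVec {n m R : Type*} [Fintype n] [Fintype m]
    [CommSemiring R] (S : Matrix n m R) (M : Matrix m m R) (u : n → R) :
    u ⬝ᵥ ((S * M * Sᵀ) *ᵥ u) = (Sᵀ *ᵥ u) ⬝ᵥ (M *ᵥ (Sᵀ *ᵥ u)) := by
  rw [← mulVec_mulVec, ← mulVec_mulVec, dotProduct_mulVec_eq_transpose_mulVec_dotProduct]

namespace Matrix.PosDef

variable {n m : Type*} [Fintype n] [DecidableEq n] [Fintype m] [DecidableEq m]

lemma mulVec_inv_mulVec {M : Matrix n n ℝ} (hM : M.PosDef) (u : n → ℝ) :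
    M *ᵥ (M⁻¹ *ᵥ u) = u := by
  rw [mulVec_mulVec, mul_nonsing_inv _ ((isUnit_iff_isUnit_det M).mp hM.isUnit), one_mulVec]

lemma two_mul_dotProduct_sub_le {M : Matrix n n ℝ} (hM : M.PosDef) (u w : n → ℝ) :
    2 * (u ⬝ᵥ w) - u ⬝ᵥ (M⁻¹ *ᵥ u) ≤ w ⬝ᵥ (M *ᵥ w) := by
  set y := M⁻¹ *ᵥ u
  have hy : M *ᵥ y = u := hM.mulVec_inv_mulVec u
  have hsq := hM.posSemidef.dotProduct_mulVec_nonneg (w - y)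
  simp only [star_trivial, mulVec_sub, sub_dotProduct, dotProduct_sub, hy] at hsq
  rw [hM.isHermitian.dotProduct_mulVec_comm y w, hy] at hsq
  linarith [dotProduct_comm u w, dotProduct_comm u y]

lemma dotProduct_mulVec_inv_mulVec {M : Matrix n n ℝ} (hM : M.PosDef) (u : n → ℝ) :
    (M⁻¹ *ᵥ u) ⬝ᵥ (M *ᵥ (M⁻¹ *ᵥ u)) = u ⬝ᵥ (M⁻¹ *ᵥ u) := by
  rw [hM.mulVec_inv_mulVec, dotProduct_comm]

lemma inv_add_mul_inv_mul_transpose {B : Matrix n n ℝ} {A : Matrix m m ℝ} (hB : B.PosDef)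
    (hA : A.PosDef) (S : Matrix n m ℝ) : (B⁻¹ + S * A⁻¹ * Sᵀ).PosDef :=
  hB.inv.add_posSemidef <| by simpa using hA.inv.posSemidef.mul_mul_conjTranspose_same S

end Matrix.PosDef

/-- Let `B` (n×n) and `tA` (m×m) be symmetric positive definite real matrices and `S` an
`n×m` real matrix.  Then `C := B⁻¹ + S tA⁻¹ Sᵀ` is symmetric positive definite and for
every `v ∈ ℝⁿ`, `vᵀ C⁻¹ v` is the (attained) minimum of `wᵀ B w + ṽᵀ tA ṽ` over all
decompositions `v = w + S ṽ`. -/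
theorem aux_space_exact_inverse (n m : ℕ)
    (B : Matrix (Fin n) (Fin n) ℝ) (tA : Matrix (Fin m) (Fin m) ℝ)
    (S : Matrix (Fin n) (Fin m) ℝ)
    (hB : B.PosDef) (htA : tA.PosDef) :
    (B⁻¹ + S * tA⁻¹ * Sᵀ).PosDef ∧
      ∀ v : Fin n → ℝ,
        IsLeast {t : ℝ | ∃ w : Fin n → ℝ, ∃ tv : Fin m → ℝ,
            v = w + S *ᵥ tv ∧ t = w ⬝ᵥ (B *ᵥ w) + tv ⬝ᵥ (tA *ᵥ tv)}
          (v ⬝ᵥ ((B⁻¹ + S * tA⁻¹ * Sᵀ)⁻¹ *ᵥ v)) := by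
  have hC := hB.inv_add_mul_inv_mul_transpose htA S
  refine ⟨hC, fun v => ?_⟩
  set C := B⁻¹ + S * tA⁻¹ * Sᵀ
  set u := C⁻¹ *ᵥ v
  have hCu : C *ᵥ u = v := hC.mulVec_inv_mulVec v
  have hval : v ⬝ᵥ u = u ⬝ᵥ (B⁻¹ *ᵥ u) + (Sᵀ *ᵥ u) ⬝ᵥ (tA⁻¹ *ᵥ (Sᵀ *ᵥ u)) := by
    rw [dotProduct_comm, ← dotProduct_mul_mul_transpose_mulVec, ← dotProduct_add, ← add_mulVec,
      hCu]
  refine ⟨⟨B⁻¹ *ᵥ u, tA⁻¹ *ᵥ (Sᵀ *ᵥ u), ?_, ?_⟩, ?_⟩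
  · rw [← hCu]
    simp only [C, add_mulVec, mulVec_mulVec, Matrix.mul_assoc]
  · rw [hB.dotProduct_mulVec_inv_mulVec, htA.dotProduct_mulVec_inv_mulVec, hval]
  · rintro t ⟨w, tv, hv, rfl⟩
    have hsplit : v ⬝ᵥ u = u ⬝ᵥ w + (Sᵀ *ᵥ u) ⬝ᵥ tv := by
      rw [dotProduct_comm, hv, dotProduct_add, dotProduct_mulVec_eq_transpose_mulVec_dotProduct]
    linarith [hB.two_mul_dotProduct_sub_le u w, htA.two_mul_dotProduct_sub_le (Sᵀ *ᵥ u) tv]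
end

section
/- Auxiliary space preconditioner with exact solvers: Let A and B be symmetric positive definite n×n real matrices, Ã a symmetric positive definite m×m real matrix, and S an n×m real matrix. Assume there are constants 0 < c₀ ≤ c₁ such that for every v ∈ ℝⁿ, c₀ · vᵀ A v ≤ inf { wᵀ B w + ṽᵀ Ã ṽ : w ∈ ℝⁿ, ṽ ∈ ℝᵐ, v = w + S ṽ } ≤ c₁ · vᵀ A v. Then the matrix C := B⁻¹ + S Ã⁻¹ Sᵀ satisfies, for every v ∈ ℝⁿ, (1/c₁) · vᵀ A⁻¹ v ≤ vᵀ C v ≤ (1/c₀) · vᵀ A⁻¹ v; in particular the spectral condition number of C A is at most c₁/c₀. -/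
/-!
The infimum over splittings is attained and equals `vᵀ C⁻¹ v`: with `z = C⁻¹ v`, the minimiser
is `w = B⁻¹ z`, `ṽ = tA⁻¹ Sᵀ z`. So the hypothesis says `c₀ A ≤ C⁻¹ ≤ c₁ A` in the Loewner
order, and since inversion reverses that order, `A⁻¹ / c₁ ≤ C ≤ A⁻¹ / c₀`. Testing these
bounds on `y = A x` for an eigenvector `x` of `C A` confines its eigenvalues to `[1/c₁, 1/c₀]`.
-/

open Matrix

namespace Matrix

variable {k l : Type*} [Fintype k] [Fintype l]

lemma dotProduct_mul_mul_transpose_mulVec_s5 (S : Matrix k l ℝ) (M : Matrix l l ℝ) (z : k → ℝ) :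
    z ⬝ᵥ (S * M * Sᵀ) *ᵥ z = (Sᵀ *ᵥ z) ⬝ᵥ M *ᵥ (Sᵀ *ᵥ z) := by
  rw [← mulVec_mulVec, ← mulVec_mulVec, dotProduct_mulVec, ← mulVec_transpose]

variable [DecidableEq k] [DecidableEq l]

lemma mulVec_nonsing_inv_mulVec {A : Matrix k k ℝ} (hA : IsUnit A) (v : k → ℝ) :
    A *ᵥ (A⁻¹ *ᵥ v) = v := by
  rw [mulVec_mulVec, mul_nonsing_inv A (A.isUnit_iff_isUnit_det.mp hA), one_mulVec]

lemma nonsing_inv_mulVec_mulVec {A : Matrix k k ℝ} (hA : IsUnit A) (v : k → ℝ) :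
    A⁻¹ *ᵥ (A *ᵥ v) = v := by
  rw [mulVec_mulVec, nonsing_inv_mul A (A.isUnit_iff_isUnit_det.mp hA), one_mulVec]

namespace PosDef

/-- Fenchel–Young for the quadratic form of `P`, whose convex conjugate is that of `P⁻¹`. -/
lemma two_mul_dotProduct_le {P : Matrix k k ℝ} (hP : P.PosDef) (u v : k → ℝ) :
    2 * (u ⬝ᵥ v) ≤ u ⬝ᵥ P *ᵥ u + v ⬝ᵥ P⁻¹ *ᵥ v := by
  set y := P⁻¹ *ᵥ v
  have hPy : P *ᵥ y = v := mulVec_nonsing_inv_mulVec hP.isUnit v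
  have hsymm : y ⬝ᵥ P *ᵥ u = u ⬝ᵥ P *ᵥ y := by
    rw [← dotProduct_transpose_mulVec, (by simpa using hP.isHermitian : P.IsSymm).eq]
  have hnonneg : 0 ≤ (u - y) ⬝ᵥ P *ᵥ (u - y) := by
    simpa using hP.posSemidef.dotProduct_mulVec_nonneg (u - y)
  rw [mulVec_sub, sub_dotProduct, dotProduct_sub, dotProduct_sub, hsymm, hPy] at hnonneg
  rw [dotProduct_comm v y]
  linarith

/-- Antitonicity of inversion in the Loewner order: `c • P ≤ Q` implies `c • Q⁻¹ ≤ P⁻¹`. -/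
lemma mul_dotProduct_inv_mulVec_le {P Q : Matrix k k ℝ} (hP : P.PosDef) (hQ : IsUnit Q)
    {c : ℝ} (hc : 0 ≤ c) (h : ∀ x, c * (x ⬝ᵥ P *ᵥ x) ≤ x ⬝ᵥ Q *ᵥ x) (v : k → ℝ) :
    c * (v ⬝ᵥ Q⁻¹ *ᵥ v) ≤ v ⬝ᵥ P⁻¹ *ᵥ v := by
  set y := Q⁻¹ *ᵥ v
  have hy : y ⬝ᵥ Q *ᵥ y = v ⬝ᵥ y := by
    rw [mulVec_nonsing_inv_mulVec hQ, dotProduct_comm]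
  have hyPy := mul_le_mul_of_nonneg_left (h y) hc
  have hfy := hP.two_mul_dotProduct_le (c • y) v
  simp only [mulVec_smul, smul_dotProduct, dotProduct_smul, smul_eq_mul] at hfy
  rw [hy] at hyPy
  rw [dotProduct_comm y v] at hfy
  linarith

end PosDef

lemma posDef_inv_add_mul_inv_mul_transpose {B : Matrix k k ℝ} {tA : Matrix l l ℝ}
    (hB : B.PosDef) (htA : tA.PosDef) (S : Matrix k l ℝ) :
    (B⁻¹ + S * tA⁻¹ * Sᵀ).PosDef := by
  have hS := htA.inv.posSemidef.mul_mul_conjTranspose_same S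
  rw [conjTranspose_eq_transpose_of_trivial] at hS
  exact hB.inv.add_posSemidef hS

def splitEnergies (B : Matrix k k ℝ) (tA : Matrix l l ℝ) (S : Matrix k l ℝ) (v : k → ℝ) :
    Set ℝ :=
  {t | ∃ w : k → ℝ, ∃ tv : l → ℝ, v = w + S *ᵥ tv ∧ t = w ⬝ᵥ (B *ᵥ w) + tv ⬝ᵥ (tA *ᵥ tv)}

/-- Optimality of the splitting `w = B⁻¹ z`, `ṽ = tA⁻¹ Sᵀ z` of `v = C z` follows by adding
the Fenchel–Young inequalities for `(w, z)` and `(ṽ, Sᵀ z)`. -/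
lemma isLeast_splitEnergies {B : Matrix k k ℝ} {tA : Matrix l l ℝ} (hB : B.PosDef)
    (htA : tA.PosDef) (S : Matrix k l ℝ) (v : k → ℝ) :
    IsLeast (splitEnergies B tA S v) (v ⬝ᵥ (B⁻¹ + S * tA⁻¹ * Sᵀ)⁻¹ *ᵥ v) := by
  set C := B⁻¹ + S * tA⁻¹ * Sᵀ with hC
  have hCunit : IsUnit C := (posDef_inv_add_mul_inv_mul_transpose hB htA S).isUnit
  obtain ⟨z, rfl⟩ : ∃ z, C *ᵥ z = v := ⟨C⁻¹ *ᵥ v, mulVec_nonsing_inv_mulVec hCunit v⟩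
  have hCz : C *ᵥ z = B⁻¹ *ᵥ z + S *ᵥ (tA⁻¹ *ᵥ (Sᵀ *ᵥ z)) := by
    rw [hC, add_mulVec, mulVec_mulVec, mulVec_mulVec]
  have hzCz : (C *ᵥ z) ⬝ᵥ z = z ⬝ᵥ B⁻¹ *ᵥ z + (Sᵀ *ᵥ z) ⬝ᵥ tA⁻¹ *ᵥ (Sᵀ *ᵥ z) := by
    rw [dotProduct_comm, hC, add_mulVec, dotProduct_add, dotProduct_mul_mul_transpose_mulVec_s5]
  rw [nonsing_inv_mulVec_mulVec hCunit]
  refine ⟨⟨B⁻¹ *ᵥ z, tA⁻¹ *ᵥ (Sᵀ *ᵥ z), hCz, ?_⟩, ?_⟩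
  · rw [mulVec_nonsing_inv_mulVec hB.isUnit, mulVec_nonsing_inv_mulVec htA.isUnit,
      hzCz, dotProduct_comm z, dotProduct_comm (Sᵀ *ᵥ z)]
  · rintro t ⟨w, tv, hv, rfl⟩
    have hw := hB.two_mul_dotProduct_le w z
    have htv := htA.two_mul_dotProduct_le tv (Sᵀ *ᵥ z)
    rw [dotProduct_transpose_mulVec, dotProduct_comm z] at htv
    rw [hv, add_dotProduct] at hzCz ⊢
    linarith

lemma mem_Icc_of_hasEigenvalue_mul {A C : Matrix k k ℝ} (hA : A.PosDef) {a b : ℝ}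
    (h : ∀ v, a * (v ⬝ᵥ A⁻¹ *ᵥ v) ≤ v ⬝ᵥ C *ᵥ v ∧ v ⬝ᵥ C *ᵥ v ≤ b * (v ⬝ᵥ A⁻¹ *ᵥ v))
    {μ : ℝ} (hμ : Module.End.HasEigenvalue (toLin' (C * A)) μ) : μ ∈ Set.Icc a b := by
  obtain ⟨x, hx⟩ := hμ.exists_hasEigenvector
  have hCAx : C *ᵥ (A *ᵥ x) = μ • x := by
    rw [mulVec_mulVec, ← toLin'_apply, hx.apply_eq_smul]
  have hpos : 0 < (A *ᵥ x) ⬝ᵥ x := by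
    simpa [dotProduct_comm] using hA.dotProduct_mulVec_pos hx.2
  obtain ⟨hlo, hhi⟩ := h (A *ᵥ x)
  rw [hCAx, nonsing_inv_mulVec_mulVec hA.isUnit, dotProduct_smul, smul_eq_mul] at hlo hhi
  exact ⟨le_of_mul_le_mul_right hlo hpos, le_of_mul_le_mul_right hhi hpos⟩

end Matrix

/-- **Auxiliary space preconditioner with exact solvers.**  Let `A`, `B` be symmetric
positive definite `n×n` matrices, `tA` a symmetric positive definite `m×m` matrix and `S`
an `n×m` matrix.  If the quadratic form of `A` is equivalent (constants `c₀ ≤ c₁`) to the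
infimum of `wᵀBw + ṽᵀtAṽ` over decompositions `v = w + Sṽ`, then
`C := B⁻¹ + S tA⁻¹ Sᵀ` satisfies `(1/c₁) vᵀA⁻¹v ≤ vᵀCv ≤ (1/c₀) vᵀA⁻¹v`; in particular
any two (real) eigenvalues `μ, ν` of `C * A` satisfy `μ ≤ (c₁/c₀) ν`, i.e. the spectral
condition number of `C * A` is at most `c₁/c₀`. -/
theorem aux_space_exact_precond (n m : ℕ)
    (A B : Matrix (Fin n) (Fin n) ℝ) (tA : Matrix (Fin m) (Fin m) ℝ)
    (S : Matrix (Fin n) (Fin m) ℝ)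
    (hA : A.PosDef) (hB : B.PosDef) (htA : tA.PosDef)
    (c₀ c₁ : ℝ) (hc₀ : 0 < c₀) (hc : c₀ ≤ c₁)
    (h : ∀ v : Fin n → ℝ,
      c₀ * (v ⬝ᵥ (A *ᵥ v)) ≤
          sInf {t : ℝ | ∃ w : Fin n → ℝ, ∃ tv : Fin m → ℝ,
            v = w + S *ᵥ tv ∧ t = w ⬝ᵥ (B *ᵥ w) + tv ⬝ᵥ (tA *ᵥ tv)} ∧
        sInf {t : ℝ | ∃ w : Fin n → ℝ, ∃ tv : Fin m → ℝ,
            v = w + S *ᵥ tv ∧ t = w ⬝ᵥ (B *ᵥ w) + tv ⬝ᵥ (tA *ᵥ tv)} ≤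
          c₁ * (v ⬝ᵥ (A *ᵥ v))) :
    (∀ v : Fin n → ℝ,
        (1 / c₁) * (v ⬝ᵥ (A⁻¹ *ᵥ v)) ≤ v ⬝ᵥ ((B⁻¹ + S * tA⁻¹ * Sᵀ) *ᵥ v) ∧
          v ⬝ᵥ ((B⁻¹ + S * tA⁻¹ * Sᵀ) *ᵥ v) ≤ (1 / c₀) * (v ⬝ᵥ (A⁻¹ *ᵥ v))) ∧
      ∀ μ ν : ℝ,
        Module.End.HasEigenvalue (Matrix.toLin' ((B⁻¹ + S * tA⁻¹ * Sᵀ) * A)) μ →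
        Module.End.HasEigenvalue (Matrix.toLin' ((B⁻¹ + S * tA⁻¹ * Sᵀ) * A)) ν →
        μ ≤ (c₁ / c₀) * ν := by
  set C := B⁻¹ + S * tA⁻¹ * Sᵀ
  have hc₁ : 0 < c₁ := hc₀.trans_le hc
  have hC : C.PosDef := posDef_inv_add_mul_inv_mul_transpose hB htA S
  have hCC : C⁻¹⁻¹ = C := nonsing_inv_nonsing_inv C (C.isUnit_iff_isUnit_det.mp hC.isUnit)
  have hCinv : ∀ v, c₀ * (v ⬝ᵥ A *ᵥ v) ≤ v ⬝ᵥ C⁻¹ *ᵥ v ∧ v ⬝ᵥ C⁻¹ *ᵥ v ≤ c₁ * (v ⬝ᵥ A *ᵥ v) :=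
    fun v ↦ (isLeast_splitEnergies hB htA S v).csInf_eq ▸ h v
  have hCinv_le : ∀ x, 1 / c₁ * (x ⬝ᵥ C⁻¹ *ᵥ x) ≤ x ⬝ᵥ A *ᵥ x := fun x ↦ by
    rw [one_div_mul_eq_div, div_le_iff₀' hc₁]
    exact (hCinv x).2
  have hbounds : ∀ v, 1 / c₁ * (v ⬝ᵥ A⁻¹ *ᵥ v) ≤ v ⬝ᵥ C *ᵥ v ∧
      v ⬝ᵥ C *ᵥ v ≤ 1 / c₀ * (v ⬝ᵥ A⁻¹ *ᵥ v) := by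
    refine fun v ↦ ⟨?_, ?_⟩
    · simpa only [hCC] using
        hC.inv.mul_dotProduct_inv_mulVec_le hA.isUnit (by positivity) hCinv_le v
    · have := hA.mul_dotProduct_inv_mulVec_le hC.inv.isUnit hc₀.le (fun x ↦ (hCinv x).1) v
      rw [hCC] at this
      rwa [one_div_mul_eq_div, le_div_iff₀' hc₀]
  refine ⟨hbounds, fun μ ν hμ hν ↦ ?_⟩
  calc μ ≤ 1 / c₀ := (mem_Icc_of_hasEigenvalue_mul hA hbounds hμ).2
    _ = c₁ / c₀ * (1 / c₁) := by field_simp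
    _ ≤ c₁ / c₀ * ν := by gcongr; exact (mem_Icc_of_hasEigenvalue_mul hA hbounds hν).1
end

section
/- Auxiliary Space Method theorem: Let A and B be symmetric positive definite n×n real matrices, Ã a symmetric positive definite m×m real matrix, and S an n×m real matrix, and assume there are constants 0 < c₀ ≤ c₁ such that for every v ∈ ℝⁿ, c₀ · vᵀ A v ≤ inf { wᵀ B w + ṽᵀ Ã ṽ : v = w + S ṽ } ≤ c₁ · vᵀ A v. Let C_B be a symmetric positive definite n×n matrix with b₀ · wᵀ B⁻¹ w ≤ wᵀ C_B w ≤ b₁ · wᵀ B⁻¹ w for all w ∈ ℝⁿ, and C_Ã a symmetric positive definite m×m matrix with g₀ · ṽᵀ Ã⁻¹ ṽ ≤ ṽᵀ C_Ã ṽ ≤ g₁ · ṽᵀ Ã⁻¹ ṽ for all ṽ ∈ ℝᵐ, where 0 < b₀ ≤ b₁ and 0 < g₀ ≤ g₁. Then C_A := C_B + S C_Ã Sᵀ is symmetric positive definite and satisfies, for all v ∈ ℝⁿ, (min(b₀, g₀)/c₁) · vᵀ A⁻¹ v ≤ vᵀ C_A v ≤ (max(b₁, g₁)/c₀) · vᵀ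 A⁻¹ v; in particular the spectral condition number of C_A A is at most (c₁/c₀) · max(b₁, g₁)/min(b₀, g₀). -/
/-!
The infimum over splittings is the quadratic form of `N⁻¹`, where `N = B⁻¹ + S Ã⁻¹ Sᵀ`:
the Fenchel–Young inequality `2 t ⬝ x ≤ tᵀ P t + xᵀ P⁻¹ x`, applied to both summands of a
splitting, bounds its energy from below by `vᵀ N⁻¹ v`, with equality for
`w = B⁻¹ u`, `ṽ = Ã⁻¹ Sᵀ u`, `u = N⁻¹ v`. The hypothesis thus says `c₀ A ≤ N⁻¹ ≤ c₁ A`,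
and inversion reverses the Loewner order, so `A⁻¹ / c₁ ≤ N ≤ A⁻¹ / c₀`. Adding the bounds
for `C_B` and `C_Ã` gives `min b₀ g₀ • N ≤ C_A ≤ max b₁ g₁ • N`. Finally, for an
eigenvector `x` of `C_A A` with eigenvalue `μ`, the vector `y = A x` satisfies
`yᵀ C_A y = μ yᵀ A⁻¹ y`, which confines `μ` to `[min b₀ g₀ / c₁, max b₁ g₁ / c₀]`.
-/

open Matrix

namespace Matrix

section CommRing

variable {ι κ R : Type*} [Fintype ι] [Fintype κ] [CommRing R]

theorem mulVec_nonsing_inv_mulVec_s6 [DecidableEq ι] {P : Matrix ι ι R} (hP : IsUnit P.det)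
    (x : ι → R) : P *ᵥ (P⁻¹ *ᵥ x) = x := by
  rw [mulVec_mulVec, mul_nonsing_inv _ hP, one_mulVec]

theorem nonsing_inv_mulVec_mulVec_s6 [DecidableEq ι] {P : Matrix ι ι R} (hP : IsUnit P.det)
    (x : ι → R) : P⁻¹ *ᵥ (P *ᵥ x) = x := by
  rw [mulVec_mulVec, nonsing_inv_mul _ hP, one_mulVec]

theorem IsSymm.dotProduct_mulVec_comm {P : Matrix ι ι R} (hP : P.IsSymm) (a b : ι → R) :
    a ⬝ᵥ (P *ᵥ b) = b ⬝ᵥ (P *ᵥ a) := by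
  rw [← dotProduct_transpose_mulVec, hP.eq]

theorem dotProduct_mul_mul_transpose_mulVec_s6 (S : Matrix ι κ R) (M : Matrix κ κ R)
    (v : ι → R) : v ⬝ᵥ ((S * M * Sᵀ) *ᵥ v) = (Sᵀ *ᵥ v) ⬝ᵥ (M *ᵥ (Sᵀ *ᵥ v)) := by
  rw [← mulVec_mulVec, ← mulVec_mulVec, dotProduct_mulVec, ← mulVec_transpose,
    dotProduct_mulVec, ← mulVec_transpose]

end CommRing

variable {ι κ : Type*} [Fintype ι] [Fintype κ]

theorem PosDef.add_mul_mul_transpose {P : Matrix ι ι ℝ} {M : Matrix κ κ ℝ} (hP : P.PosDef)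
    (S : Matrix ι κ ℝ) (hM : M.PosSemidef) : (P + S * M * Sᵀ).PosDef :=
  hP.add_posSemidef (by simpa using hM.mul_mul_conjTranspose_same S)

variable [DecidableEq ι] [DecidableEq κ]

theorem PosDef.isUnit_det {P : Matrix ι ι ℝ} (hP : P.PosDef) : IsUnit P.det :=
  hP.det_pos.ne'.isUnit

theorem PosDef.two_mul_dotProduct_le_s6 {P : Matrix ι ι ℝ} (hP : P.PosDef) (t x : ι → ℝ) :
    2 * (t ⬝ᵥ x) ≤ t ⬝ᵥ (P *ᵥ t) + x ⬝ᵥ (P⁻¹ *ᵥ x) := by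
  set u := P⁻¹ *ᵥ x
  have hPu : P *ᵥ u = x := mulVec_nonsing_inv_mulVec_s6 hP.isUnit_det x
  have hsymm : P.IsSymm := isHermitian_iff_isSymm.mp hP.isHermitian
  have hnonneg : 0 ≤ (t - u) ⬝ᵥ (P *ᵥ (t - u)) := by
    simpa using hP.posSemidef.dotProduct_mulVec_nonneg (t - u)
  have hut : u ⬝ᵥ (P *ᵥ t) = t ⬝ᵥ x := by rw [hsymm.dotProduct_mulVec_comm, hPu]
  rw [mulVec_sub, dotProduct_sub, sub_dotProduct, sub_dotProduct, hut, hPu,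
    dotProduct_comm u x] at hnonneg
  linarith

theorem PosDef.mul_dotProduct_inv_mulVec_le_s6 {P Q : Matrix ι ι ℝ} (hP : P.PosDef)
    (hQ : IsUnit Q.det) {c : ℝ} (hc : 0 ≤ c)
    (hPQ : ∀ x, c * (x ⬝ᵥ (P *ᵥ x)) ≤ x ⬝ᵥ (Q *ᵥ x)) (x : ι → ℝ) :
    c * (x ⬝ᵥ (Q⁻¹ *ᵥ x)) ≤ x ⬝ᵥ (P⁻¹ *ᵥ x) := by
  set t := Q⁻¹ *ᵥ x
  have htx : x ⬝ᵥ t = t ⬝ᵥ x := dotProduct_comm x t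
  have hQt : t ⬝ᵥ (Q *ᵥ t) = t ⬝ᵥ x := by rw [mulVec_nonsing_inv_mulVec_s6 hQ]
  have hyoung := hP.two_mul_dotProduct_le_s6 (c • t) x
  rw [smul_dotProduct, mulVec_smul, smul_dotProduct, dotProduct_smul, smul_eq_mul,
    smul_eq_mul, smul_eq_mul] at hyoung
  nlinarith [mul_le_mul_of_nonneg_left (hPQ t) hc]

theorem PosDef.dotProduct_inv_mulVec_bounds {P Q : Matrix ι ι ℝ} (hP : P.PosDef)
    (hQ : Q.PosDef) {c₀ c₁ : ℝ} (hc₀ : 0 < c₀) (hc₁ : 0 < c₁)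
    (hPQ : ∀ x, c₀ * (x ⬝ᵥ (P *ᵥ x)) ≤ x ⬝ᵥ (Q *ᵥ x) ∧ x ⬝ᵥ (Q *ᵥ x) ≤ c₁ * (x ⬝ᵥ (P *ᵥ x)))
    (x : ι → ℝ) :
    c₁⁻¹ * (x ⬝ᵥ (P⁻¹ *ᵥ x)) ≤ x ⬝ᵥ (Q⁻¹ *ᵥ x) ∧
      x ⬝ᵥ (Q⁻¹ *ᵥ x) ≤ c₀⁻¹ * (x ⬝ᵥ (P⁻¹ *ᵥ x)) := by
  constructor
  · refine hQ.mul_dotProduct_inv_mulVec_le_s6 hP.isUnit_det (inv_nonneg.mpr hc₁.le) (fun y => ?_) x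
    rw [inv_mul_le_iff₀ hc₁]
    exact (hPQ y).2
  · rw [le_inv_mul_iff₀ hc₀]
    exact hP.mul_dotProduct_inv_mulVec_le_s6 hQ.isUnit_det hc₀.le (fun y => (hPQ y).1) x

theorem PosDef.isLeast_splitting_energy {B : Matrix ι ι ℝ} {tA : Matrix κ κ ℝ}
    (hB : B.PosDef) (htA : tA.PosDef) (S : Matrix ι κ ℝ) (v : ι → ℝ) :
    IsLeast {t : ℝ | ∃ w : ι → ℝ, ∃ tv : κ → ℝ,
        v = w + S *ᵥ tv ∧ t = w ⬝ᵥ (B *ᵥ w) + tv ⬝ᵥ (tA *ᵥ tv)}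
      (v ⬝ᵥ ((B⁻¹ + S * tA⁻¹ * Sᵀ)⁻¹ *ᵥ v)) := by
  have hN := hB.inv.add_mul_mul_transpose S htA.inv.posSemidef
  obtain ⟨u, rfl⟩ : ∃ u, (B⁻¹ + S * tA⁻¹ * Sᵀ) *ᵥ u = v :=
    ⟨_, mulVec_nonsing_inv_mulVec_s6 hN.isUnit_det v⟩
  rw [nonsing_inv_mulVec_mulVec_s6 hN.isUnit_det]
  have hsplit : (B⁻¹ + S * tA⁻¹ * Sᵀ) *ᵥ u = B⁻¹ *ᵥ u + S *ᵥ (tA⁻¹ *ᵥ (Sᵀ *ᵥ u)) := by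
    rw [add_mulVec, ← mulVec_mulVec, ← mulVec_mulVec]
  have henergy : ((B⁻¹ + S * tA⁻¹ * Sᵀ) *ᵥ u) ⬝ᵥ u =
      u ⬝ᵥ (B⁻¹ *ᵥ u) + (Sᵀ *ᵥ u) ⬝ᵥ (tA⁻¹ *ᵥ (Sᵀ *ᵥ u)) := by
    rw [dotProduct_comm, add_mulVec, dotProduct_add, dotProduct_mul_mul_transpose_mulVec_s6]
  refine ⟨⟨B⁻¹ *ᵥ u, tA⁻¹ *ᵥ (Sᵀ *ᵥ u), hsplit, ?_⟩, ?_⟩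
  · rw [henergy, mulVec_nonsing_inv_mulVec_s6 hB.isUnit_det,
      mulVec_nonsing_inv_mulVec_s6 htA.isUnit_det, dotProduct_comm (B⁻¹ *ᵥ u),
      dotProduct_comm (tA⁻¹ *ᵥ _)]
  · rintro _ ⟨w, tv, hv, rfl⟩
    have hw := hB.two_mul_dotProduct_le_s6 w u
    have htv := htA.two_mul_dotProduct_le_s6 tv (Sᵀ *ᵥ u)
    rw [dotProduct_transpose_mulVec] at htv
    have hsum : ((B⁻¹ + S * tA⁻¹ * Sᵀ) *ᵥ u) ⬝ᵥ u = w ⬝ᵥ u + u ⬝ᵥ (S *ᵥ tv) := by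
      rw [hv, add_dotProduct, dotProduct_comm (S *ᵥ tv)]
    linarith

theorem PosDef.hasEigenvalue_mul_mem_Icc {A C : Matrix ι ι ℝ} (hA : A.PosDef) {l u : ℝ}
    (hC : ∀ v, l * (v ⬝ᵥ (A⁻¹ *ᵥ v)) ≤ v ⬝ᵥ (C *ᵥ v) ∧ v ⬝ᵥ (C *ᵥ v) ≤ u * (v ⬝ᵥ (A⁻¹ *ᵥ v)))
    {μ : ℝ} (hμ : Module.End.HasEigenvalue (toLin' (C * A)) μ) : μ ∈ Set.Icc l u := by
  obtain ⟨x, hx⟩ := hμ.exists_hasEigenvector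
  have hCAx : C *ᵥ (A *ᵥ x) = μ • x := by
    rw [mulVec_mulVec, ← toLin'_apply, hx.apply_eq_smul]
  have hpos : 0 < x ⬝ᵥ (A *ᵥ x) := by simpa using hA.dotProduct_mulVec_pos hx.2
  obtain ⟨hl, hu⟩ := hC (A *ᵥ x)
  rw [nonsing_inv_mulVec_mulVec_s6 hA.isUnit_det, hCAx, dotProduct_smul, smul_eq_mul,
    dotProduct_comm (A *ᵥ x)] at hl hu
  exact ⟨le_of_mul_le_mul_right hl hpos, le_of_mul_le_mul_right hu hpos⟩

end Matrix

theorem min_mul_add_le_add_le_max_mul_add {b₀ b₁ g₀ g₁ p q x y : ℝ} (hp : 0 ≤ p) (hq : 0 ≤ q)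
    (hx : b₀ * p ≤ x ∧ x ≤ b₁ * p) (hy : g₀ * q ≤ y ∧ y ≤ g₁ * q) :
    min b₀ g₀ * (p + q) ≤ x + y ∧ x + y ≤ max b₁ g₁ * (p + q) := by
  have := mul_le_mul_of_nonneg_right (min_le_left b₀ g₀) hp
  have := mul_le_mul_of_nonneg_right (min_le_right b₀ g₀) hq
  have := mul_le_mul_of_nonneg_right (le_max_left b₁ g₁) hp
  have := mul_le_mul_of_nonneg_right (le_max_right b₁ g₁) hq
  constructor <;> linarith

theorem auxiliary_space_method_general (n m : ℕ)
    (A B : Matrix (Fin n) (Fin n) ℝ) (tA : Matrix (Fin m) (Fin m) ℝ)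
    (S : Matrix (Fin n) (Fin m) ℝ)
    (hA : A.PosDef) (hB : B.PosDef) (htA : tA.PosDef)
    (c₀ c₁ : ℝ) (hc₀ : 0 < c₀) (hc : c₀ ≤ c₁)
    (h : ∀ v : Fin n → ℝ,
      c₀ * (v ⬝ᵥ (A *ᵥ v)) ≤
          sInf {t : ℝ | ∃ w : Fin n → ℝ, ∃ tv : Fin m → ℝ,
            v = w + S *ᵥ tv ∧ t = w ⬝ᵥ (B *ᵥ w) + tv ⬝ᵥ (tA *ᵥ tv)} ∧
        sInf {t : ℝ | ∃ w : Fin n → ℝ, ∃ tv : Fin m → ℝ,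
            v = w + S *ᵥ tv ∧ t = w ⬝ᵥ (B *ᵥ w) + tv ⬝ᵥ (tA *ᵥ tv)} ≤
          c₁ * (v ⬝ᵥ (A *ᵥ v)))
    (CB : Matrix (Fin n) (Fin n) ℝ) (hCB : CB.PosDef)
    (CtA : Matrix (Fin m) (Fin m) ℝ) (hCtA : CtA.PosDef)
    (b₀ b₁ g₀ g₁ : ℝ) (hb₀ : 0 < b₀) (hb : b₀ ≤ b₁) (hg₀ : 0 < g₀)
    (hCBspec : ∀ w : Fin n → ℝ,
      b₀ * (w ⬝ᵥ (B⁻¹ *ᵥ w)) ≤ w ⬝ᵥ (CB *ᵥ w) ∧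
        w ⬝ᵥ (CB *ᵥ w) ≤ b₁ * (w ⬝ᵥ (B⁻¹ *ᵥ w)))
    (hCtAspec : ∀ tv : Fin m → ℝ,
      g₀ * (tv ⬝ᵥ (tA⁻¹ *ᵥ tv)) ≤ tv ⬝ᵥ (CtA *ᵥ tv) ∧
        tv ⬝ᵥ (CtA *ᵥ tv) ≤ g₁ * (tv ⬝ᵥ (tA⁻¹ *ᵥ tv))) :
    (CB + S * CtA * Sᵀ).PosDef ∧
      (∀ v : Fin n → ℝ,
        (min b₀ g₀ / c₁) * (v ⬝ᵥ (A⁻¹ *ᵥ v)) ≤ v ⬝ᵥ ((CB + S * CtA * Sᵀ) *ᵥ v) ∧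
          v ⬝ᵥ ((CB + S * CtA * Sᵀ) *ᵥ v) ≤ (max b₁ g₁ / c₀) * (v ⬝ᵥ (A⁻¹ *ᵥ v))) ∧
      ∀ μ ν : ℝ,
        Module.End.HasEigenvalue (Matrix.toLin' ((CB + S * CtA * Sᵀ) * A)) μ →
        Module.End.HasEigenvalue (Matrix.toLin' ((CB + S * CtA * Sᵀ) * A)) ν →
        μ ≤ (c₁ / c₀) * (max b₁ g₁ / min b₀ g₀) * ν := by
  have hc₁ : 0 < c₁ := hc₀.trans_le hc
  have hmin : 0 < min b₀ g₀ := lt_min hb₀ hg₀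
  have hmax : 0 ≤ max b₁ g₁ := le_max_of_le_left (hb₀.le.trans hb)
  set N := B⁻¹ + S * tA⁻¹ * Sᵀ
  set C := CB + S * CtA * Sᵀ
  have hN : N.PosDef := hB.inv.add_mul_mul_transpose S htA.inv.posSemidef
  have hNA : ∀ v, c₁⁻¹ * (v ⬝ᵥ (A⁻¹ *ᵥ v)) ≤ v ⬝ᵥ (N *ᵥ v) ∧
      v ⬝ᵥ (N *ᵥ v) ≤ c₀⁻¹ * (v ⬝ᵥ (A⁻¹ *ᵥ v)) := fun v => by
    refine nonsing_inv_nonsing_inv N hN.isUnit_det ▸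
      hA.dotProduct_inv_mulVec_bounds hN.inv hc₀ hc₁ (fun x => ?_) v
    rw [← (hB.isLeast_splitting_energy htA S x).csInf_eq]
    exact h x
  have hCN : ∀ v, min b₀ g₀ * (v ⬝ᵥ (N *ᵥ v)) ≤ v ⬝ᵥ (C *ᵥ v) ∧
      v ⬝ᵥ (C *ᵥ v) ≤ max b₁ g₁ * (v ⬝ᵥ (N *ᵥ v)) := fun v => by
    simp only [N, C, add_mulVec, dotProduct_add, dotProduct_mul_mul_transpose_mulVec_s6]
    exact min_mul_add_le_add_le_max_mul_add
      (by simpa using hB.inv.posSemidef.dotProduct_mulVec_nonneg v)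
      (by simpa using htA.inv.posSemidef.dotProduct_mulVec_nonneg (Sᵀ *ᵥ v))
      (hCBspec v) (hCtAspec (Sᵀ *ᵥ v))
  have hCA : ∀ v, min b₀ g₀ / c₁ * (v ⬝ᵥ (A⁻¹ *ᵥ v)) ≤ v ⬝ᵥ (C *ᵥ v) ∧
      v ⬝ᵥ (C *ᵥ v) ≤ max b₁ g₁ / c₀ * (v ⬝ᵥ (A⁻¹ *ᵥ v)) := fun v => by
    rw [div_eq_mul_inv, div_eq_mul_inv, mul_assoc, mul_assoc]
    exact ⟨(mul_le_mul_of_nonneg_left (hNA v).1 hmin.le).trans (hCN v).1,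
      (hCN v).2.trans (mul_le_mul_of_nonneg_left (hNA v).2 hmax)⟩
  refine ⟨hCB.add_mul_mul_transpose S hCtA.posSemidef, hCA, fun μ ν hμ hν => ?_⟩
  calc μ ≤ max b₁ g₁ / c₀ := (hA.hasEigenvalue_mul_mem_Icc hCA hμ).2
    _ = c₁ / c₀ * (max b₁ g₁ / min b₀ g₀) * (min b₀ g₀ / c₁) := by field_simp
    _ ≤ c₁ / c₀ * (max b₁ g₁ / min b₀ g₀) * ν := by
      gcongr
      exact (hA.hasEigenvalue_mul_mem_Icc hCA hν).1

/-- **Auxiliary Space Method theorem.**  Let `A`, `B` be symmetric positive definite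
`n×n` matrices, `tA` a symmetric positive definite `m×m` matrix and `S` an `n×m` matrix,
with the stable-splitting equivalence (constants `c₀ ≤ c₁`).  Let `CB` and `CtA` be
symmetric positive definite preconditioners spectrally equivalent to `B⁻¹` (constants
`b₀ ≤ b₁`) resp. `tA⁻¹` (constants `g₀ ≤ g₁`).  Then `C_A := CB + S CtA Sᵀ` is symmetric
positive definite, spectrally equivalent to `A⁻¹` with constants `min(b₀,g₀)/c₁` and
`max(b₁,g₁)/c₀`; in particular any two eigenvalues `μ, ν` of `C_A * A` satisfy
`μ ≤ (c₁/c₀)·(max(b₁,g₁)/min(b₀,g₀))·ν`, i.e. the spectral condition number of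
`C_A * A` is at most `(c₁/c₀)·max(b₁,g₁)/min(b₀,g₀)`. -/
theorem auxiliary_space_method (n m : ℕ)
    (A B : Matrix (Fin n) (Fin n) ℝ) (tA : Matrix (Fin m) (Fin m) ℝ)
    (S : Matrix (Fin n) (Fin m) ℝ)
    (hA : A.PosDef) (hB : B.PosDef) (htA : tA.PosDef)
    (c₀ c₁ : ℝ) (hc₀ : 0 < c₀) (hc : c₀ ≤ c₁)
    (h : ∀ v : Fin n → ℝ,
      c₀ * (v ⬝ᵥ (A *ᵥ v)) ≤
          sInf {t : ℝ | ∃ w : Fin n → ℝ, ∃ tv : Fin m → ℝ,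
            v = w + S *ᵥ tv ∧ t = w ⬝ᵥ (B *ᵥ w) + tv ⬝ᵥ (tA *ᵥ tv)} ∧
        sInf {t : ℝ | ∃ w : Fin n → ℝ, ∃ tv : Fin m → ℝ,
            v = w + S *ᵥ tv ∧ t = w ⬝ᵥ (B *ᵥ w) + tv ⬝ᵥ (tA *ᵥ tv)} ≤
          c₁ * (v ⬝ᵥ (A *ᵥ v)))
    (CB : Matrix (Fin n) (Fin n) ℝ) (hCB : CB.PosDef)
    (CtA : Matrix (Fin m) (Fin m) ℝ) (hCtA : CtA.PosDef)
    (b₀ b₁ g₀ g₁ : ℝ) (hb₀ : 0 < b₀) (hb : b₀ ≤ b₁) (hg₀ : 0 < g₀) (hg : g₀ ≤ g₁)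
    (hCBspec : ∀ w : Fin n → ℝ,
      b₀ * (w ⬝ᵥ (B⁻¹ *ᵥ w)) ≤ w ⬝ᵥ (CB *ᵥ w) ∧
        w ⬝ᵥ (CB *ᵥ w) ≤ b₁ * (w ⬝ᵥ (B⁻¹ *ᵥ w)))
    (hCtAspec : ∀ tv : Fin m → ℝ,
      g₀ * (tv ⬝ᵥ (tA⁻¹ *ᵥ tv)) ≤ tv ⬝ᵥ (CtA *ᵥ tv) ∧
        tv ⬝ᵥ (CtA *ᵥ tv) ≤ g₁ * (tv ⬝ᵥ (tA⁻¹ *ᵥ tv))) :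
    (CB + S * CtA * Sᵀ).PosDef ∧
      (∀ v : Fin n → ℝ,
        (min b₀ g₀ / c₁) * (v ⬝ᵥ (A⁻¹ *ᵥ v)) ≤ v ⬝ᵥ ((CB + S * CtA * Sᵀ) *ᵥ v) ∧
          v ⬝ᵥ ((CB + S * CtA * Sᵀ) *ᵥ v) ≤ (max b₁ g₁ / c₀) * (v ⬝ᵥ (A⁻¹ *ᵥ v))) ∧
      ∀ μ ν : ℝ,
        Module.End.HasEigenvalue (Matrix.toLin' ((CB + S * CtA * Sᵀ) * A)) μ →
        Module.End.HasEigenvalue (Matrix.toLin' ((CB + S * CtA * Sᵀ) * A)) ν →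
        μ ≤ (c₁ / c₀) * (max b₁ g₁ / min b₀ g₀) * ν :=
  auxiliary_space_method_general n m A B tA S hA hB htA c₀ c₁ hc₀ hc h CB hCB CtA hCtA b₀ b₁ g₀ g₁
    hb₀ hb hg₀ hCBspec hCtAspec
end
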